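/- arXiv:2107.02235 — 6 statements merged into one kernel-verified Lean document; each statement's English description precedes it below -/
import Mathlib

section
/- Let M ∈ ℂ^{K_P×K_P} be a positive semidefinite Hermitian matrix of rank t with eigenvalues λ_1 ≤ … ≤ λ_{K_P}, and let f(γ) = γ^{K_P(K−N)/K} · det((1/γ)·I_{K_P} + M) for γ > 0, where K = K_P + K_S and K > N. If t = N·K_P/K then f does not attain an absolute minimum on (0,∞) but its infimum over (0,∞) is positive; if t < N·K_P/K then the infimum of f over (0,∞) is zero. -/
open Matrix Finset ComplexOrder

/-- Second part of Theorem 1 of the paper: with `f(γ) = γ^{K_P(K−N)/K} det((1/γ)I + M)`,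
if `t = N·K_P/K` then `f` has positive infimum on `(0,∞)` which is not attained, and
if `t < N·K_P/K` then the infimum of `f` over `(0,∞)` is zero. -/
theorem stmt2 (K_P K_S N t K : ℕ) (hK : K = K_P + K_S) (hKN : N < K)
    (ht1 : 1 ≤ t) (htK : t ≤ K_P)
    (M : Matrix (Fin K_P) (Fin K_P) ℂ) (hM : M.PosSemidef) (hMrank : M.rank = t)
    (lam : Fin K_P → ℝ) (hmono : Monotone lam) (hnn : ∀ k, 0 ≤ lam k)
    (hzero : ∀ k : Fin K_P, lam k = 0 ↔ (k : ℕ) < K_P - t)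
    (hdet : ∀ γ : ℝ, 0 < γ →
      ((γ⁻¹ : ℂ) • (1 : Matrix (Fin K_P) (Fin K_P) ℂ) + M).det
        = ∏ k, ((γ⁻¹ + lam k : ℝ) : ℂ))
    (f : ℝ → ℝ)
    (hf : ∀ γ : ℝ, 0 < γ →
      f γ = γ ^ (((K_P : ℝ) * ((K : ℝ) - N)) / K) * ∏ k, (γ⁻¹ + lam k)) :
    (t * K = N * K_P →
      0 < sInf (f '' Set.Ioi 0) ∧ ∀ γ ∈ Set.Ioi (0 : ℝ), sInf (f '' Set.Ioi 0) < f γ) ∧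
    (t * K < N * K_P → sInf (f '' Set.Ioi 0) = 0) := by
  classical
  have hKpos : 0 < K := by omega
  have hKP1 : 1 ≤ K_P := le_trans ht1 htK
  set r := K_P - t with hrdef
  have hrK : r < K_P := by omega
  set a : ℝ := ((K_P : ℝ) * ((K : ℝ) - N)) / K with hadef
  set S₁ : Finset (Fin K_P) := Finset.univ.filter (fun k => ¬ (k : ℕ) < r) with hS₁
  have hmemS₁ : ∀ k : Fin K_P, k ∈ S₁ ↔ ¬ (k : ℕ) < r := by
    intro k; simp [hS₁]
  have hpos : ∀ k ∈ S₁, 0 < lam k := by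
    intro k hk
    refine (hnn k).lt_of_ne (fun h => ?_)
    exact (hmemS₁ k).1 hk ((hzero k).1 h.symm)
  have hS₁ne : S₁.Nonempty := by
    refine ⟨⟨K_P - 1, by omega⟩, (hmemS₁ _).2 ?_⟩
    simp only []
    omega
  have hcard : (Finset.univ.filter (fun k : Fin K_P => (k : ℕ) < r)).card = r := by
    have heq : Finset.univ.filter (fun k : Fin K_P => (k : ℕ) < r)
        = Finset.Iio (⟨r, hrK⟩ : Fin K_P) := by
      ext k; simp [Fin.lt_def]
    rw [heq, Fin.card_Iio]
  have hsplit : ∀ γ : ℝ, 0 < γ →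
      (∏ k, (γ⁻¹ + lam k)) = γ⁻¹ ^ r * ∏ k ∈ S₁, (γ⁻¹ + lam k) := by
    intro γ hγ
    rw [← Finset.prod_filter_mul_prod_filter_not Finset.univ
      (fun k : Fin K_P => (k : ℕ) < r) (fun k => γ⁻¹ + lam k)]
    congr 1
    rw [Finset.prod_congr rfl (fun k hk => ?_), Finset.prod_const, hcard]
    have hk' : (k : ℕ) < r := by simpa using hk
    rw [(hzero k).2 hk', add_zero]
  have hfpos : ∀ γ : ℝ, 0 < γ → 0 < f γ := by
    intro γ hγ
    rw [hf γ hγ]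
    have h1 : (0:ℝ) < γ ^ a := Real.rpow_pos_of_pos hγ a
    have h2 : (0:ℝ) < ∏ k, (γ⁻¹ + lam k) :=
      Finset.prod_pos (fun k _ => add_pos_of_pos_of_nonneg (inv_pos.2 hγ) (hnn k))
    exact mul_pos h1 h2
  have hne : (f '' Set.Ioi 0).Nonempty :=
    ⟨f 1, Set.mem_image_of_mem f (by norm_num : (1:ℝ) ∈ Set.Ioi 0)⟩
  have hbdd0 : BddBelow (f '' Set.Ioi 0) := by
    refine ⟨0, fun x hx => ?_⟩
    obtain ⟨γ, hγ, rfl⟩ := hx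
    exact (hfpos γ hγ).le
  constructor
  · -- case t*K = N*K_P
    intro hcase
    have ha : a = (r : ℝ) := by
      rw [hadef, hrdef, Nat.cast_sub htK]
      have hc : (t:ℝ) * K = (N:ℝ) * K_P := by exact_mod_cast hcase
      have hK0 : (K:ℝ) ≠ 0 := by positivity
      field_simp
      nlinarith [hc]
    have hform : ∀ γ : ℝ, 0 < γ → f γ = ∏ k ∈ S₁, (γ⁻¹ + lam k) := by
      intro γ hγ
      rw [hf γ hγ, hsplit γ hγ, ha, Real.rpow_natCast, ← mul_assoc, ← mul_pow,
        mul_inv_cancel₀ (ne_of_gt hγ), one_pow, one_mul]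
    set L : ℝ := ∏ k ∈ S₁, lam k with hL
    have hLpos : 0 < L := Finset.prod_pos hpos
    have hlb : ∀ γ : ℝ, 0 < γ → L ≤ f γ := by
      intro γ hγ
      rw [hform γ hγ]
      exact Finset.prod_le_prod (fun k hk => (hpos k hk).le)
        (fun k hk => le_add_of_nonneg_left (inv_pos.2 hγ).le)
    have hinfL : L ≤ sInf (f '' Set.Ioi 0) := by
      refine le_csInf hne (fun x hx => ?_)
      obtain ⟨γ, hγ, rfl⟩ := hx
      exact hlb γ hγ
    refine ⟨lt_of_lt_of_le hLpos hinfL, fun γ hγ => ?_⟩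
    have hγ0 : (0:ℝ) < γ := hγ
    have h2γ : (0:ℝ) < 2 * γ := by linarith
    have hlt : f (2 * γ) < f γ := by
      rw [hform γ hγ0, hform (2*γ) h2γ]
      refine Finset.prod_lt_prod_of_nonempty
        (fun k hk => add_pos (inv_pos.2 h2γ) (hpos k hk)) (fun k hk => ?_) hS₁ne
      have : (2*γ)⁻¹ < γ⁻¹ := by
        rw [inv_lt_inv₀ h2γ hγ0]; linarith
      linarith
    exact lt_of_le_of_lt (csInf_le hbdd0 ⟨2*γ, h2γ, rfl⟩) hlt
  · -- case t*K < N*K_P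
    intro hcase
    set c : ℝ := a - r with hcdef
    have hcval : c = ((t:ℝ) * K - (N:ℝ) * K_P) / K := by
      rw [hcdef, hadef, hrdef, Nat.cast_sub htK]
      have hK0 : (K:ℝ) ≠ 0 := by positivity
      field_simp
      ring
    have hcneg : c < 0 := by
      rw [hcval]
      apply div_neg_of_neg_of_pos
      · have : (t:ℝ) * K < (N:ℝ) * K_P := by exact_mod_cast hcase
        linarith
      · exact_mod_cast hKpos
    have hform : ∀ γ : ℝ, 0 < γ → f γ = γ ^ c * ∏ k ∈ S₁, (γ⁻¹ + lam k) := by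
      intro γ hγ
      rw [hf γ hγ, hsplit γ hγ, ← mul_assoc]
      congr 1
      rw [inv_pow, ← Real.rpow_natCast γ r, ← Real.rpow_neg hγ.le,
        ← Real.rpow_add hγ, hcdef, sub_eq_add_neg]
    have htend : Filter.Tendsto f Filter.atTop (nhds 0) := by
      have h1 : Filter.Tendsto (fun γ : ℝ => γ ^ c) Filter.atTop (nhds 0) := by
        have := tendsto_rpow_neg_atTop (show (0:ℝ) < -c by linarith)
        simpa [neg_neg] using this
      have h2 : Filter.Tendsto (fun γ : ℝ => ∏ k ∈ S₁, (γ⁻¹ + lam k))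
          Filter.atTop (nhds (∏ k ∈ S₁, lam k)) := by
        apply tendsto_finset_prod
        intro k _
        have := tendsto_inv_atTop_zero.add
          (tendsto_const_nhds : Filter.Tendsto (fun _ : ℝ => lam k) Filter.atTop (nhds (lam k)))
        simpa using this
      have h3 := h1.mul h2
      rw [zero_mul] at h3
      refine h3.congr' ?_
      filter_upwards [Filter.eventually_gt_atTop (0:ℝ)] with γ hγ
      exact (hform γ hγ).symm
    have hnonneg : 0 ≤ sInf (f '' Set.Ioi 0) := by
      refine Real.sInf_nonneg (fun x hx => ?_)
      obtain ⟨γ, hγ, rfl⟩ := hx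
      exact (hfpos γ hγ).le
    have hle : sInf (f '' Set.Ioi 0) ≤ 0 := by
      by_contra h
      push_neg at h
      have hev : ∀ᶠ γ in Filter.atTop, f γ < sInf (f '' Set.Ioi 0) :=
        htend.eventually_lt_const h
      obtain ⟨γ, hγlt, hγ0⟩ := (hev.and (Filter.eventually_gt_atTop (0:ℝ))).exists
      exact absurd (csInf_le hbdd0 ⟨γ, hγ0, rfl⟩) (not_le.2 hγlt)
    linarith
end

section
/- Let σ_1^2 ≤ … ≤ σ_N^2 be nonnegative reals with exactly m_1 positive values (the largest m_1), let K = K_P + K_S, and suppose m_1 ≤ N·K_P/K. Then the function f_2(γ) = γ^{−K_P N/K} · Π_{i=N−m_1+1}^{N} (1 + γ σ_i^2) over γ ∈ (0,∞) has positive infimum but no minimizer when m_1 = N·K_P/K, and has infimum zero when m_1 < N·K_P/K. -/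
open Finset

/-- Corollary 2 of the paper (degenerate cases): with `σ_i² > 0` exactly for
`i > N−m_1` and `f_2(γ) = γ^{−K_P N/K} Π_{i=N−m_1+1}^{N} (1 + γσ_i²)`,
if `m_1 = N·K_P/K` then `f_2` has positive infimum on `(0,∞)` which is not attained,
and if `m_1 < N·K_P/K` then its infimum over `(0,∞)` is zero. -/
theorem stmt7 (N K_P K_S m₁ K : ℕ) (hK : K = K_P + K_S)
    (hKP : 0 < K_P) (hKS : 0 < K_S) (hN : 0 < N) (hm : 0 < m₁) (hmN : m₁ ≤ N)
    (s : ℕ → ℝ) (hzero : ∀ i, i ≤ N - m₁ → s i = 0)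
    (hpos : ∀ i, N - m₁ < i → i ≤ N → 0 < s i)
    (f : ℝ → ℝ)
    (hf : ∀ γ : ℝ, 0 < γ →
      f γ = γ ^ (-((N : ℝ) * K_P) / K) * ∏ i ∈ Finset.Icc (N - m₁ + 1) N, (1 + γ * s i)) :
    (m₁ * K = N * K_P →
      0 < sInf (f '' Set.Ioi 0) ∧ ∀ γ ∈ Set.Ioi (0 : ℝ), sInf (f '' Set.Ioi 0) < f γ) ∧
    (m₁ * K < N * K_P → sInf (f '' Set.Ioi 0) = 0) := by
  set S := Finset.Icc (N - m₁ + 1) N with hS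
  have hK0 : 0 < K := by omega
  have hKR : (0:ℝ) < K := by exact_mod_cast hK0
  have hcard : S.card = m₁ := by
    rw [hS, Nat.card_Icc]; omega
  have hSne : S.Nonempty := ⟨N, by simp [hS]; omega⟩
  have hsp : ∀ i ∈ S, 0 < s i := by
    intro i hi
    rw [hS, Finset.mem_Icc] at hi
    exact hpos i (by omega) (by omega)
  have hfpos : ∀ γ : ℝ, 0 < γ → 0 < f γ := by
    intro γ hγ
    rw [hf γ hγ]
    exact mul_pos (Real.rpow_pos_of_pos hγ _)
      (Finset.prod_pos fun i hi => by have := hsp i hi; positivity)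
  have hbdd : BddBelow (f '' Set.Ioi 0) := by
    refine ⟨0, ?_⟩
    rintro y ⟨γ, hγ, rfl⟩
    exact (hfpos γ hγ).le
  have hne : (f '' Set.Ioi 0).Nonempty := ⟨f 1, 1, by norm_num, rfl⟩
  constructor
  · intro hEq
    have he : -((N : ℝ) * K_P) / K = -(m₁ : ℝ) := by
      have : (m₁ : ℝ) * K = N * K_P := by exact_mod_cast hEq
      field_simp
      linarith
    have hrepr : ∀ γ : ℝ, 0 < γ → f γ = ∏ i ∈ S, (γ⁻¹ + s i) := by
      intro γ hγ
      rw [hf γ hγ, he]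
      have h1 : ∀ i ∈ S, γ⁻¹ + s i = γ⁻¹ * (1 + γ * s i) := by
        intro i _
        field_simp
      rw [Finset.prod_congr rfl h1, Finset.prod_mul_distrib, Finset.prod_const, hcard,
        Real.rpow_neg hγ.le, Real.rpow_natCast, ← inv_pow]
    set P := ∏ i ∈ S, s i with hP
    have hPpos : 0 < P := Finset.prod_pos hsp
    have hlt : ∀ γ : ℝ, 0 < γ → P < f γ := by
      intro γ hγ
      rw [hrepr γ hγ]
      exact Finset.prod_lt_prod_of_nonempty hsp
        (fun i hi => lt_add_of_pos_left (s i) (inv_pos.mpr hγ)) hSne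
    have hInfP : P ≤ sInf (f '' Set.Ioi 0) := by
      refine le_csInf hne ?_
      rintro y ⟨γ, hγ, rfl⟩
      exact (hlt γ hγ).le
    refine ⟨lt_of_lt_of_le hPpos hInfP, ?_⟩
    intro γ hγ
    have hγ' : (0:ℝ) < γ := hγ
    have h1 : sInf (f '' Set.Ioi 0) ≤ f (γ + 1) :=
      csInf_le hbdd ⟨γ + 1, by simp; linarith, rfl⟩
    have h2 : f (γ + 1) < f γ := by
      rw [hrepr γ hγ', hrepr (γ + 1) (by linarith)]
      refine Finset.prod_lt_prod_of_nonempty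
        (fun i hi => by have := hsp i hi; positivity)
        (fun i hi => ?_) hSne
      have : (γ + 1)⁻¹ < γ⁻¹ := by
        apply inv_strictAnti₀ hγ'
        linarith
      linarith
    linarith
  · intro hLt
    set e : ℝ := -((N : ℝ) * K_P) / K with heq
    have hsum : e + m₁ < 0 := by
      have h1 : (m₁ : ℝ) * K < N * K_P := by exact_mod_cast hLt
      rw [heq]
      rw [div_add' _ _ _ (ne_of_gt hKR)]
      apply div_neg_of_neg_of_pos _ hKR
      linarith
    set C : ℝ := ∏ i ∈ S, (1 + s i) with hC
    have hCpos : 0 < C := Finset.prod_pos fun i hi => by have := hsp i hi; positivity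
    have hub : ∀ γ : ℝ, 1 ≤ γ → f γ ≤ C * γ ^ (e + m₁) := by
      intro γ hγ1
      have hγ : (0:ℝ) < γ := lt_of_lt_of_le one_pos hγ1
      rw [hf γ hγ]
      have hb : (∏ i ∈ S, (1 + γ * s i)) ≤ ∏ i ∈ S, γ * (1 + s i) := by
        refine Finset.prod_le_prod (fun i hi => by have := hsp i hi; positivity)
          (fun i hi => ?_)
        have := hsp i hi
        nlinarith
      have heqp : ∏ i ∈ S, γ * (1 + s i) = γ ^ m₁ * C := by
        rw [Finset.prod_mul_distrib, Finset.prod_const, hcard]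
      calc γ ^ e * ∏ i ∈ S, (1 + γ * s i)
          ≤ γ ^ e * (γ ^ m₁ * C) := by
            refine mul_le_mul_of_nonneg_left ?_ (Real.rpow_pos_of_pos hγ _).le
            rw [← heqp]; exact hb
        _ = C * γ ^ (e + m₁) := by
            rw [Real.rpow_add hγ, Real.rpow_natCast]
            ring
    refine le_antisymm ?_ (le_csInf hne ?_)
    · by_contra h
      push_neg at h
      have htend : Filter.Tendsto (fun γ : ℝ => C * γ ^ (e + m₁)) Filter.atTop (nhds 0) := by
        have := (tendsto_rpow_neg_atTop (y := -(e + m₁)) (by linarith)).const_mul C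
        simpa using this
      have hev : ∀ᶠ γ : ℝ in Filter.atTop,
          C * γ ^ (e + m₁) < sInf (f '' Set.Ioi 0) :=
        htend.eventually (gt_mem_nhds h)
      obtain ⟨γ, hγ1, hγ2⟩ := (hev.and (Filter.eventually_ge_atTop 1)).exists
      have hγ : (0:ℝ) < γ := lt_of_lt_of_le one_pos hγ2
      have h1 : sInf (f '' Set.Ioi 0) ≤ f γ := csInf_le hbdd ⟨γ, hγ, rfl⟩
      have h2 := hub γ hγ2
      linarith
    · rintro y ⟨γ, hγ, rfl⟩
      exact (hfpos γ hγ).le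
end

section
/- Let A ∈ ℂ^{N×N} be Hermitian positive semidefinite with eigenvalues a_1 ≥ … ≥ a_N and let B = diag(b_1,…,b_N) with 0 ≤ b_1 ≤ … ≤ b_N. Then min over unitary U of tr(A U B U^†) = Σ_{i=1}^N a_i b_i (oppositely-ordered pairing), i.e., the minimum of the trace over the unitary orbit equals the sum of products of oppositely ordered eigenvalues. -/
open Matrix ComplexOrder

/-- Rearrangement inequality over the Birkhoff polytope. -/
lemma aux_ds {N : ℕ} (a b : Fin N → ℝ) (ha : Antitone a) (hb : Monotone b)
    (S : Matrix (Fin N) (Fin N) ℝ) (hS : S ∈ doublyStochastic ℝ (Fin N)) :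
    ∑ i, a i * b i ≤ ∑ i, ∑ j, a i * b j * S i j := by
  have hav : Antivary a b := by
    intro i j hij
    exact ha (le_of_not_gt fun hji => (hb hji.le).not_gt hij)
  set f : Matrix (Fin N) (Fin N) ℝ →ₗ[ℝ] ℝ :=
    { toFun := fun M => ∑ i, ∑ j, a i * b j * M i j
      map_add' := by intro x y; simp [mul_add, Finset.sum_add_distrib]
      map_smul' := by
        intro c x
        simp [Finset.mul_sum, smul_eq_mul]
        congr 1; ext i; congr 1; ext j; ring } with hf
  have hperm : ∀ σ : Equiv.Perm (Fin N),
      ∑ i, a i * b i ≤ f (σ.permMatrix ℝ) := by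
    intro σ
    have h1 : f (σ.permMatrix ℝ) = ∑ i, a i * b (σ i) := by
      simp only [hf, LinearMap.coe_mk, AddHom.coe_mk]
      refine Finset.sum_congr rfl fun i _ => ?_
      rw [Finset.sum_eq_single (σ i)]
      · simp [Equiv.Perm.permMatrix, PEquiv.toMatrix_apply, Equiv.toPEquiv_apply]
      · intro j _ hj
        simp [Equiv.Perm.permMatrix, PEquiv.toMatrix_apply, Equiv.toPEquiv_apply,
          Ne.symm hj]
      · simp
    rw [h1]
    simpa [smul_eq_mul] using hav.sum_smul_le_sum_smul_comp_perm (σ := σ)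
  have hsub : (doublyStochastic ℝ (Fin N) : Set (Matrix (Fin N) (Fin N) ℝ)) ⊆
      {M | ∑ i, a i * b i ≤ f M} := by
    rw [doublyStochastic_eq_convexHull_permMatrix]
    refine convexHull_min ?_ (convex_halfSpace_ge (LinearMap.isLinear f) _)
    rintro M ⟨σ, rfl⟩
    exact hperm σ
  exact hsub hS

/-- Trace formula for `diag(a) W diag(b) Wᴴ`. -/
lemma aux_trace {N : ℕ} (a b : Fin N → ℝ)
    (W : Matrix (Fin N) (Fin N) ℂ) :
    ((Matrix.diagonal (fun i => (a i : ℂ)) * W * Matrix.diagonal (fun i => (b i : ℂ)) *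
      Wᴴ).trace).re = ∑ i, ∑ j, a i * b j * Complex.normSq (W i j) := by
  rw [Matrix.trace, Complex.re_sum]
  refine Finset.sum_congr rfl fun i _ => ?_
  simp only [Matrix.diag_apply, Matrix.mul_apply, Matrix.diagonal_apply,
    Complex.re_sum, Finset.sum_ite_eq']
  refine Finset.sum_congr rfl fun j _ => ?_
  have h : (∑ x, (∑ x_1, (if i = x_1 then (a i : ℂ) else 0) * W x_1 x) *
      if x = j then (b x : ℂ) else 0) * Wᴴ j i
      = ((a i * b j * Complex.normSq (W i j) : ℝ) : ℂ) := by
    rw [Matrix.conjTranspose_apply, Finset.sum_eq_single j, Finset.sum_eq_single i]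
    · simp only [if_pos rfl]
      push_cast
      rw [show (a i : ℂ) * W i j * (b j : ℂ) * star (W i j)
          = (a i : ℂ) * (b j : ℂ) * (W i j * star (W i j)) by ring,
        show star (W i j) = (starRingEnd ℂ) (W i j) from rfl, Complex.mul_conj]
    · intro c _ hc; simp [Ne.symm hc]
    · simp
    · intro c _ hc; simp [hc]
    · simp
  rw [h, Complex.ofReal_re]

/-- The squared moduli of a unitary matrix form a doubly stochastic matrix. -/
lemma aux_unitary_ds {N : ℕ} (W : Matrix (Fin N) (Fin N) ℂ)
    (hW : W ∈ Matrix.unitaryGroup (Fin N) ℂ) :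
    (Matrix.of fun i j => Complex.normSq (W i j)) ∈ doublyStochastic ℝ (Fin N) := by
  obtain ⟨h1, h2⟩ := Unitary.mem_iff.mp hW
  rw [Matrix.star_eq_conjTranspose] at h1 h2
  rw [mem_doublyStochastic_iff_sum]
  refine ⟨fun i j => Complex.normSq_nonneg _, fun i => ?_, fun j => ?_⟩
  · have h := congrFun (congrFun h2 i) i
    rw [Matrix.mul_apply] at h
    have h3 : ∑ j, W i j * Wᴴ j i = ((∑ j, Complex.normSq (W i j) : ℝ) : ℂ) := by
      push_cast
      refine Finset.sum_congr rfl fun j _ => ?_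
      rw [Matrix.conjTranspose_apply,
        show star (W i j) = (starRingEnd ℂ) (W i j) from rfl, Complex.mul_conj]
    rw [h3, Matrix.one_apply_eq] at h
    exact_mod_cast h
  · have h := congrFun (congrFun h1 j) j
    rw [Matrix.mul_apply] at h
    have h3 : ∑ i, Wᴴ j i * W i j = ((∑ i, Complex.normSq (W i j) : ℝ) : ℂ) := by
      push_cast
      refine Finset.sum_congr rfl fun i _ => ?_
      rw [Matrix.conjTranspose_apply, mul_comm,
        show star (W i j) = (starRingEnd ℂ) (W i j) from rfl, Complex.mul_conj]
    rw [h3, Matrix.one_apply_eq] at h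
    exact_mod_cast h

/-- For unitary `U`, the objective value equals `∑ᵢⱼ aᵢ bⱼ |(Vᴴ U)ᵢⱼ|²`. -/
lemma aux_value {N : ℕ} (a b : Fin N → ℝ)
    (V U : Matrix (Fin N) (Fin N) ℂ)
    (hV : V ∈ Matrix.unitaryGroup (Fin N) ℂ) :
    (((V * Matrix.diagonal (fun i => (a i : ℂ)) * Vᴴ) * U *
        Matrix.diagonal (fun i => (b i : ℂ)) * Uᴴ).trace).re
      = ∑ i, ∑ j, a i * b j * Complex.normSq ((Vᴴ * U) i j) := by
  have key : ((V * Matrix.diagonal (fun i => (a i : ℂ)) * Vᴴ) * U *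
        Matrix.diagonal (fun i => (b i : ℂ)) * Uᴴ).trace
      = (Matrix.diagonal (fun i => (a i : ℂ)) * (Vᴴ * U) *
          Matrix.diagonal (fun i => (b i : ℂ)) * (Vᴴ * U)ᴴ).trace := by
    rw [show (V * Matrix.diagonal (fun i => (a i : ℂ)) * Vᴴ) * U *
        Matrix.diagonal (fun i => (b i : ℂ)) * Uᴴ
        = V * (Matrix.diagonal (fun i => (a i : ℂ)) * (Vᴴ * U) *
            Matrix.diagonal (fun i => (b i : ℂ)) * Uᴴ) by
      simp only [Matrix.mul_assoc],
      Matrix.trace_mul_comm]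
    simp only [Matrix.conjTranspose_mul, Matrix.conjTranspose_conjTranspose,
      Matrix.mul_assoc]
  rw [key, aux_trace]

/-- Mirsky's trace theorem: for `A` Hermitian PSD with eigenvalues
`a_1 ≥ … ≥ a_N` (so `A = V diag(a) V†` for some unitary `V`) and
`B = diag(b_1,…,b_N)` with `0 ≤ b_1 ≤ … ≤ b_N`, the minimum over unitary `U` of
`tr(A U B U†)` equals `Σ_i a_i b_i` (oppositely-ordered pairing). -/
theorem stmt11 (N : ℕ) (A : Matrix (Fin N) (Fin N) ℂ) (hA : A.PosSemidef)
    (a b : Fin N → ℝ) (ha : Antitone a) (hann : ∀ i, 0 ≤ a i)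
    (hb : Monotone b) (hbnn : ∀ i, 0 ≤ b i)
    (V : Matrix (Fin N) (Fin N) ℂ) (hV : V ∈ Matrix.unitaryGroup (Fin N) ℂ)
    (hAV : A = V * Matrix.diagonal (fun i => (a i : ℂ)) * Vᴴ) :
    IsLeast (Set.range fun U : Matrix.unitaryGroup (Fin N) ℂ =>
        ((A * (U : Matrix (Fin N) (Fin N) ℂ) * Matrix.diagonal (fun i => (b i : ℂ)) *
          ((U : Matrix (Fin N) (Fin N) ℂ))ᴴ).trace).re)
      (∑ i, a i * b i) := by
  constructor
  · refine ⟨⟨V, hV⟩, ?_⟩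
    simp only [hAV, aux_value a b V V hV]
    have hVV : Vᴴ * V = 1 := by
      have := (Unitary.mem_iff.mp hV).1
      rwa [Matrix.star_eq_conjTranspose] at this
    rw [hVV]
    refine Finset.sum_congr rfl fun i _ => ?_
    rw [Finset.sum_eq_single i]
    · simp [Matrix.one_apply_eq]
    · intro j _ hj
      simp [Matrix.one_apply, Ne.symm hj]
    · simp
  · rintro x ⟨U, rfl⟩
    simp only [hAV, aux_value a b V U hV]
    exact aux_ds a b ha hb _
      (aux_unitary_ds _ (mul_mem (Unitary.star_mem hV) U.2))
end

section
/- Let R_s ∈ ℂ^{r×r} be Hermitian positive semidefinite and R̃ as above with Schur complement R̃_{1.2} and B = [I_r, −β^†]. With E = [I_r, 0_{r×(N−r)}]^T, it holds that (R̃ + E R_s E^†)^{−1} = B^† (R_s + R̃_{1.2})^{−1} B + block-diag(0_{r×r}, R̃_22^{−1}), and det(R̃ + E R_s E^†) = det R̃_22 · det(R_s + R̃_{1.2}). -/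
/-!
Adding `E R_s Eᴴ` with `E = [I, 0]ᵀ` only replaces the top-left block `R̃_11` by `R_s + R̃_11`, so
the claims are the Schur-complement formulas for the inverse and determinant of the block matrix
`[[R_s + R̃_11, R̃_12], [R̃_21, R̃_22]]`, whose Schur complement with respect to `R̃_22` is
`R_s + R̃_{1.2}`. Hermitian symmetry turns the off-diagonal factor `R̃_12 R̃_22⁻¹` into `βᴴ`.
Positive definiteness supplies the invertibility of `R̃_22` (a principal submatrix) and of the
perturbed matrix (a positive definite plus a positive semidefinite matrix).
-/

open Matrix ComplexOrder

namespace Matrix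

variable {m n α : Type*}

theorem fromRows_one_zero_mul_mul_conjTranspose [Fintype m] [DecidableEq m] [Semiring α]
    [StarRing α] (A : Matrix m m α) :
    fromRows (1 : Matrix m m α) (0 : Matrix n m α) * A *
        (fromRows (1 : Matrix m m α) (0 : Matrix n m α))ᴴ = fromBlocks A 0 0 0 := by
  rw [conjTranspose_fromRows_eq_fromCols_conjTranspose, fromRows_mul, fromRows_mul_fromCols]
  simp

variable [Fintype m] [Fintype n] [DecidableEq m] [DecidableEq n]

theorem inv_fromBlocks_eq_fromRows_mul_inv_mul_fromCols [CommRing α] (A : Matrix m m α)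
    (B : Matrix m n α) (C : Matrix n m α) (D : Matrix n n α) [Invertible D]
    [Invertible (fromBlocks A B C D)] :
    (fromBlocks A B C D)⁻¹ =
      fromRows 1 (-(D⁻¹ * C)) * (A - B * D⁻¹ * C)⁻¹ * fromCols 1 (-(B * D⁻¹)) +
        fromBlocks 0 0 0 D⁻¹ := by
  let := invertibleOfFromBlocks₂₂Invertible A B C D
  rw [← invOf_eq_nonsing_inv, invOf_fromBlocks₂₂_eq, fromRows_mul, fromRows_mul_fromCols,
    fromBlocks_add]
  simp only [invOf_eq_nonsing_inv, Matrix.mul_one, Matrix.one_mul, add_zero, Matrix.mul_neg,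
    Matrix.neg_mul, neg_neg, Matrix.mul_assoc, add_comm D⁻¹]

theorem IsHermitian.inv_fromBlocks_eq [CommRing α] [StarRing α] {A : Matrix m m α}
    {B : Matrix m n α} {C : Matrix n m α} {D : Matrix n n α}
    (hM : (Matrix.fromBlocks A B C D).IsHermitian) [Invertible D]
    [Invertible (Matrix.fromBlocks A B C D)] :
    (Matrix.fromBlocks A B C D)⁻¹ =
      (fromCols 1 (-(D⁻¹ * C)ᴴ))ᴴ * (A - B * D⁻¹ * C)⁻¹ * fromCols 1 (-(D⁻¹ * C)ᴴ) +
        Matrix.fromBlocks 0 0 0 D⁻¹ := by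
  obtain ⟨-, -, hCB, hD⟩ := isHermitian_fromBlocks_iff.mp hM
  have hβ : (D⁻¹ * C)ᴴ = B * D⁻¹ := by
    rw [conjTranspose_mul, conjTranspose_nonsing_inv, hD.eq, hCB]
  rw [inv_fromBlocks_eq_fromRows_mul_inv_mul_fromCols,
    conjTranspose_fromCols_eq_fromRows_conjTranspose, conjTranspose_neg,
    conjTranspose_conjTranspose, conjTranspose_one, hβ]

end Matrix

theorem stmt14_general (N r : ℕ)
    (R11 : Matrix (Fin r) (Fin r) ℂ) (R12 : Matrix (Fin r) (Fin (N - r)) ℂ)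
    (R21 : Matrix (Fin (N - r)) (Fin r) ℂ) (R22 : Matrix (Fin (N - r)) (Fin (N - r)) ℂ)
    (hPD : (Matrix.fromBlocks R11 R12 R21 R22).PosDef)
    (Rs : Matrix (Fin r) (Fin r) ℂ) (hRs : Rs.PosSemidef)
    (E : Matrix (Fin r ⊕ Fin (N - r)) (Fin r) ℂ)
    (hE : E = Matrix.fromRows (1 : Matrix (Fin r) (Fin r) ℂ) (0 : Matrix (Fin (N - r)) (Fin r) ℂ)) :
    (Matrix.fromBlocks R11 R12 R21 R22 + E * Rs * Eᴴ)⁻¹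
        = (Matrix.fromCols (1 : Matrix (Fin r) (Fin r) ℂ) (-(R22⁻¹ * R21)ᴴ))ᴴ *
            (Rs + (R11 - R12 * R22⁻¹ * R21))⁻¹ *
            Matrix.fromCols (1 : Matrix (Fin r) (Fin r) ℂ) (-(R22⁻¹ * R21)ᴴ) +
          Matrix.fromBlocks 0 0 0 R22⁻¹ ∧
    (Matrix.fromBlocks R11 R12 R21 R22 + E * Rs * Eᴴ).det
        = R22.det * (Rs + (R11 - R12 * R22⁻¹ * R21)).det := by
  have hPD' : (fromBlocks R11 R12 R21 R22 + E * Rs * Eᴴ).PosDef :=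
    hPD.add_posSemidef (hRs.mul_mul_conjTranspose_same E)
  have hperturbed :
      fromBlocks R11 R12 R21 R22 + E * Rs * Eᴴ = fromBlocks (Rs + R11) R12 R21 R22 := by
    rw [hE, fromRows_one_zero_mul_mul_conjTranspose, fromBlocks_add, add_comm Rs]
    simp only [add_zero]
  rw [hperturbed] at hPD' ⊢
  let : Invertible R22 := (hPD.submatrix Sum.inr_injective).isUnit.invertible
  let := hPD'.isUnit.invertible
  refine ⟨?_, ?_⟩
  · rw [hPD'.isHermitian.inv_fromBlocks_eq, add_sub_assoc]
  · rw [det_fromBlocks₂₂, invOf_eq_nonsing_inv, add_sub_assoc]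

/-- Variant of the block inversion identities with the top-left block perturbed by a PSD
matrix: for `R̃` Hermitian positive definite with blocks `R̃_11, R̃_12, R̃_21, R̃_22`,
`R_s` Hermitian PSD, `E = [I_r, 0]ᵀ`, `R̃_{1.2} = R̃_11 − R̃_12 R̃_22⁻¹ R̃_21`,
`β = R̃_22⁻¹ R̃_21` and `B = [I_r, −β†]`, one has
`(R̃ + E R_s E†)⁻¹ = B† (R_s + R̃_{1.2})⁻¹ B + blockdiag(0, R̃_22⁻¹)` and
`det(R̃ + E R_s E†) = det R̃_22 · det(R_s + R̃_{1.2})`. -/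
theorem stmt14 (N r : ℕ) (hr : r ≤ N)
    (R11 : Matrix (Fin r) (Fin r) ℂ) (R12 : Matrix (Fin r) (Fin (N - r)) ℂ)
    (R21 : Matrix (Fin (N - r)) (Fin r) ℂ) (R22 : Matrix (Fin (N - r)) (Fin (N - r)) ℂ)
    (hPD : (Matrix.fromBlocks R11 R12 R21 R22).PosDef)
    (Rs : Matrix (Fin r) (Fin r) ℂ) (hRs : Rs.PosSemidef)
    (E : Matrix (Fin r ⊕ Fin (N - r)) (Fin r) ℂ)
    (hE : E = Matrix.fromRows (1 : Matrix (Fin r) (Fin r) ℂ) (0 : Matrix (Fin (N - r)) (Fin r) ℂ)) :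
    (Matrix.fromBlocks R11 R12 R21 R22 + E * Rs * Eᴴ)⁻¹
        = (Matrix.fromCols (1 : Matrix (Fin r) (Fin r) ℂ) (-(R22⁻¹ * R21)ᴴ))ᴴ *
            (Rs + (R11 - R12 * R22⁻¹ * R21))⁻¹ *
            Matrix.fromCols (1 : Matrix (Fin r) (Fin r) ℂ) (-(R22⁻¹ * R21)ᴴ) +
          Matrix.fromBlocks 0 0 0 R22⁻¹ ∧
    (Matrix.fromBlocks R11 R12 R21 R22 + E * Rs * Eᴴ).det
        = R22.det * (Rs + (R11 - R12 * R22⁻¹ * R21)).det :=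
  stmt14_general N r R11 R12 R21 R22 hPD Rs hRs E hE
end

section
/- Let g(γ) = −N K_S log γ + g_1(γ), where g_1 is the piecewise function from the second-order compressed likelihood: g_1(γ) = K Σ_{i=1}^N log(γK/(γγ_i + λ̂_i(γ))) + K_S Σ_{i=1}^N log λ̂_i(γ) with λ̂_i(γ) = max(K_S γ γ_i/K_P, 1), where γ_1 ≥ … ≥ γ_{K_P} > 0, γ_i = 0 for i > K_P, r < K_P ≤ N, K = K_P + K_S, K_S ≥ N, and at most r of the λ̂_i exceed 1 (λ̂_i(γ) = 1 for i > r). If (K_P − r)K_S > (N − K_P)K_P, then g(γ) → −∞ both as γ → 0⁺ and as γ → +∞, so g attains its global maximum at a stationary point in (0, ∞). -/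
/-!
Every summand of `g` behaves like `a * log γ + (convergent)` at both ends of `(0, ∞)`, so `g`
does too, with the exponents adding up. As `γ → 0⁺` all `λ̂_i → 1` and the total exponent is
`N K_P > 0`; as `γ → ∞` the summands `i ≤ r`, `r < i ≤ K_P` and `i > K_P` contribute `0`,
`-K_S` and `K_P`, for a total of `(N - K_P) K_P - (K_P - r) K_S < 0`. Either way `g → -∞`,
and a continuous function on `(0, ∞)` with this behaviour attains its maximum (compose with
`exp` and use the extreme value theorem on `ℝ`).
-/

open Finset Filter Real Topology

def HasLogGrowth (l : Filter ℝ) (f : ℝ → ℝ) (a : ℝ) : Prop :=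
  ∃ L, Tendsto (fun x => f x - a * log x) l (𝓝 L)

namespace HasLogGrowth

variable {l : Filter ℝ} {f g : ℝ → ℝ} {a b : ℝ}

theorem congr' (hf : HasLogGrowth l f a) (hfg : f =ᶠ[l] g) : HasLogGrowth l g a := by
  obtain ⟨L, hL⟩ := hf
  exact ⟨L, hL.congr' (hfg.mono fun x hx => by simp only [hx])⟩

theorem add (hf : HasLogGrowth l f a) (hg : HasLogGrowth l g b) :
    HasLogGrowth l (fun x => f x + g x) (a + b) := by
  obtain ⟨L, hL⟩ := hf
  obtain ⟨M, hM⟩ := hg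
  exact ⟨L + M, (hL.add hM).congr fun x => by ring⟩

theorem const_mul (hf : HasLogGrowth l f a) (c : ℝ) :
    HasLogGrowth l (fun x => c * f x) (c * a) := by
  obtain ⟨L, hL⟩ := hf
  exact ⟨c * L, (hL.const_mul c).congr fun x => by ring⟩

theorem sum {ι : Type*} (s : Finset ι) {f : ι → ℝ → ℝ} {a : ι → ℝ}
    (h : ∀ i ∈ s, HasLogGrowth l (f i) (a i)) :
    HasLogGrowth l (fun x => ∑ i ∈ s, f i x) (∑ i ∈ s, a i) := by
  classical
  induction s using Finset.induction_on with
  | empty => exact ⟨0, tendsto_const_nhds.congr fun x => by simp⟩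
  | insert j s hj ih =>
    simp only [Finset.sum_insert hj]
    exact (h j (mem_insert_self j s)).add (ih fun i hi => h i (mem_insert_of_mem hi))

theorem tendsto_atBot (hf : HasLogGrowth l f a) (hlog : Tendsto (fun x => a * log x) l atBot) :
    Tendsto f l atBot := by
  obtain ⟨L, hL⟩ := hf
  exact (hL.add_atBot hlog).congr fun x => by ring

end HasLogGrowth

theorem hasLogGrowth_log (l : Filter ℝ) : HasLogGrowth l log 1 :=
  ⟨0, tendsto_const_nhds.congr fun x => by ring⟩

theorem hasLogGrowth_log_of_tendsto {l : Filter ℝ} {v : ℝ → ℝ} {d : ℝ}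
    (hv : Tendsto v l (𝓝 d)) (hd : d ≠ 0) : HasLogGrowth l (fun x => log (v x)) 0 :=
  ⟨log d, (hv.log hd).congr fun x => by ring⟩

theorem hasLogGrowth_log_of_tendsto_div {l : Filter ℝ} {v : ℝ → ℝ} {d : ℝ}
    (hl : ∀ᶠ x in l, 0 < x) (hv : Tendsto (fun x => v x / x) l (𝓝 d)) (hd : 0 < d) :
    HasLogGrowth l (fun x => log (v x)) 1 := by
  refine ⟨log d, (hv.log hd.ne').congr' ?_⟩
  filter_upwards [hl, hv.eventually (lt_mem_nhds hd)] with x hx hvx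
  have hvx0 : v x ≠ 0 := fun h => by simp [h] at hvx
  rw [log_div hvx0 hx.ne', one_mul]

theorem hasLogGrowth_log_mul_div_of_tendsto {l : Filter ℝ} {v : ℝ → ℝ} {K m : ℝ}
    (hl : ∀ᶠ x in l, 0 < x) (hK : 0 < K) (hv : Tendsto v l (𝓝 m)) (hm : 0 < m) :
    HasLogGrowth l (fun x => log (x * K / v x)) 1 := by
  refine hasLogGrowth_log_of_tendsto_div hl ((tendsto_const_nhds.div hv hm.ne').congr' ?_)
    (div_pos hK hm)
  filter_upwards [hl] with x hx
  rw [Pi.div_apply, mul_div_assoc, mul_div_cancel_left₀ _ hx.ne']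

theorem hasLogGrowth_log_mul_div_of_tendsto_div {l : Filter ℝ} {v : ℝ → ℝ} {K m : ℝ}
    (hl : ∀ᶠ x in l, 0 < x) (hK : 0 < K) (hv : Tendsto (fun x => v x / x) l (𝓝 m))
    (hm : 0 < m) : HasLogGrowth l (fun x => log (x * K / v x)) 0 := by
  refine hasLogGrowth_log_of_tendsto ((tendsto_const_nhds.div hv hm.ne').congr' ?_)
    (div_pos hK hm).ne'
  filter_upwards [hl] with x hx
  rw [Pi.div_apply, div_div_eq_mul_div, mul_comm]

theorem tendsto_max_mul_one_div_atTop (a : ℝ) :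
    Tendsto (fun x => max (a * x) 1 / x) atTop (𝓝 (max a 0)) := by
  refine (tendsto_const_nhds.max tendsto_inv_atTop_zero).congr' ?_
  filter_upwards [eventually_gt_atTop 0] with x hx
  rw [← max_div_div_right hx.le, mul_div_cancel_right₀ _ hx.ne', one_div]

theorem ContinuousOn.exists_forall_le_of_tendsto_atBot_Ioi {f : ℝ → ℝ}
    (hf : ContinuousOn f (Set.Ioi 0)) (h0 : Tendsto f (𝓝[>] 0) atBot)
    (htop : Tendsto f atTop atBot) : ∃ x, 0 < x ∧ ∀ y, 0 < y → f y ≤ f x := by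
  have hcont : Continuous (f ∘ exp) :=
    hf.comp_continuous continuous_exp fun t => exp_pos t
  have hlim : Tendsto (f ∘ exp) (cocompact ℝ) atBot := by
    rw [cocompact_eq_atBot_atTop]
    exact tendsto_sup.2 ⟨h0.comp tendsto_exp_atBot_nhdsGT, htop.comp tendsto_exp_atTop⟩
  obtain ⟨t, ht⟩ := hcont.exists_forall_ge hlim
  refine ⟨exp t, exp_pos t, fun y hy => ?_⟩
  simpa only [Function.comp, exp_log hy] using ht (Real.log y)

noncomputable def compressedLogLikelihood (N K_S K : ℕ) (gam : ℕ → ℝ) (lam : ℕ → ℝ → ℝ)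
    (γ : ℝ) : ℝ :=
  -((N : ℝ) * K_S) * log γ + (K : ℝ) * ∑ i ∈ Icc 1 N, log (γ * K / (γ * gam i + lam i γ)) +
    (K_S : ℝ) * ∑ i ∈ Icc 1 N, log (lam i γ)

section CompressedLogLikelihood

variable {N K_S K : ℕ} {gam : ℕ → ℝ} {lam : ℕ → ℝ → ℝ}

theorem continuousOn_compressedLogLikelihood (hK : 0 < K) (hnn : ∀ i, 0 ≤ gam i)
    (hlam_cont : ∀ i, Continuous (lam i)) (hlam_one : ∀ i γ, 1 ≤ lam i γ) :
    ContinuousOn (compressedLogLikelihood N K_S K gam lam) (Set.Ioi 0) := by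
  have hden : ∀ i, ∀ γ ∈ Set.Ioi (0 : ℝ), 0 < γ * gam i + lam i γ := fun i γ hγ =>
    add_pos_of_nonneg_of_pos (mul_nonneg (le_of_lt hγ) (hnn i)) (one_pos.trans_le (hlam_one i γ))
  unfold compressedLogLikelihood
  refine ((continuousOn_const.mul (continuousOn_log.mono fun γ hγ => ?_)).add
    (continuousOn_const.mul (continuousOn_finsetSum _ fun i _ => ?_))).add
    (continuousOn_const.mul (continuousOn_finsetSum _ fun i _ => ?_))
  · exact ne_of_gt hγ
  · refine ((continuousOn_id.mul continuousOn_const).div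
      ((continuousOn_id.mul continuousOn_const).add (hlam_cont i).continuousOn)
      fun γ hγ => (hden i γ hγ).ne').log fun γ hγ =>
        (div_pos (mul_pos hγ (Nat.cast_pos.2 hK)) (hden i γ hγ)).ne'
  · exact (hlam_cont i).continuousOn.log fun γ _ => (one_pos.trans_le (hlam_one i γ)).ne'

theorem hasLogGrowth_compressedLogLikelihood {l : Filter ℝ} {eA eB : ℕ → ℝ}
    (hA : ∀ i ∈ Icc 1 N, HasLogGrowth l (fun γ => log (γ * K / (γ * gam i + lam i γ))) (eA i))
    (hB : ∀ i ∈ Icc 1 N, HasLogGrowth l (fun γ => log (lam i γ)) (eB i)) :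
    HasLogGrowth l (compressedLogLikelihood N K_S K gam lam)
      (-((N : ℝ) * K_S) + K * ∑ i ∈ Icc 1 N, eA i + K_S * ∑ i ∈ Icc 1 N, eB i) := by
  have h := (((hasLogGrowth_log l).const_mul (-((N : ℝ) * K_S))).add
    ((HasLogGrowth.sum _ hA).const_mul K)).add ((HasLogGrowth.sum _ hB).const_mul K_S)
  rwa [mul_one] at h

end CompressedLogLikelihood

section Eigenvalues

variable {K_P K_S r : ℕ} {gam : ℕ → ℝ} {lam : ℕ → ℝ → ℝ}

theorem one_le_lam
    (hlam : ∀ i γ, lam i γ = if i ≤ r then max ((K_S : ℝ) * γ * gam i / K_P) 1 else 1)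
    (i : ℕ) (γ : ℝ) : 1 ≤ lam i γ := by
  rw [hlam]
  split_ifs
  exacts [le_max_right _ _, le_rfl]

theorem continuous_lam
    (hlam : ∀ i γ, lam i γ = if i ≤ r then max ((K_S : ℝ) * γ * gam i / K_P) 1 else 1)
    (i : ℕ) : Continuous (lam i) := by
  rw [show lam i = _ from funext (hlam i)]
  split_ifs
  exacts [by fun_prop, continuous_const]

theorem tendsto_lam_nhdsGT
    (hlam : ∀ i γ, lam i γ = if i ≤ r then max ((K_S : ℝ) * γ * gam i / K_P) 1 else 1)
    (i : ℕ) : Tendsto (lam i) (𝓝[>] 0) (𝓝 1) := by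
  have h := ((continuous_lam hlam i).tendsto 0).mono_left (nhdsWithin_le_nhds (s := Set.Ioi 0))
  rwa [hlam, mul_zero, zero_mul, zero_div, max_eq_right zero_le_one, ite_self] at h

theorem tendsto_lam_div_atTop
    (hlam : ∀ i γ, lam i γ = if i ≤ r then max ((K_S : ℝ) * γ * gam i / K_P) 1 else 1)
    (i : ℕ) : Tendsto (fun γ => lam i γ / γ) atTop
      (𝓝 (if i ≤ r then max ((K_S : ℝ) * gam i / K_P) 0 else 0)) := by
  simp_rw [hlam]
  split_ifs
  · refine (tendsto_max_mul_one_div_atTop _).congr fun γ => ?_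
    ring_nf
  · simpa only [one_div] using tendsto_inv_atTop_zero

end Eigenvalues

section Asymptotics

variable {N K_P K_S r K : ℕ} {gam : ℕ → ℝ} {lam : ℕ → ℝ → ℝ}

theorem hasLogGrowth_compressedLogLikelihood_nhdsGT
    (hlam : ∀ i γ, lam i γ = if i ≤ r then max ((K_S : ℝ) * γ * gam i / K_P) 1 else 1)
    (hK : K = K_P + K_S) (hK0 : 0 < K) :
    HasLogGrowth (𝓝[>] 0) (compressedLogLikelihood N K_S K gam lam) (N * K_P) := by
  have hl : ∀ᶠ γ in 𝓝[>] (0 : ℝ), 0 < γ := self_mem_nhdsWithin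
  have hA : ∀ i ∈ Icc 1 N,
      HasLogGrowth (𝓝[>] 0) (fun γ => log (γ * K / (γ * gam i + lam i γ))) 1 := fun i _ => by
    refine hasLogGrowth_log_mul_div_of_tendsto hl (Nat.cast_pos.2 hK0) ?_ one_pos
    simpa using ((tendsto_id'.2 nhdsWithin_le_nhds).mul_const (gam i)).add
      (tendsto_lam_nhdsGT hlam i)
  have hB : ∀ i ∈ Icc 1 N, HasLogGrowth (𝓝[>] 0) (fun γ => log (lam i γ)) 0 := fun i _ =>
    hasLogGrowth_log_of_tendsto (tendsto_lam_nhdsGT hlam i) one_ne_zero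
  convert hasLogGrowth_compressedLogLikelihood hA hB using 1
  simp only [sum_const, Nat.card_Icc, add_tsub_cancel_right, nsmul_eq_mul, mul_one, mul_zero,
    add_zero, hK, Nat.cast_add]
  ring

theorem hasLogGrowth_log_mul_div_lam_atTop
    (hlam : ∀ i γ, lam i γ = if i ≤ r then max ((K_S : ℝ) * γ * gam i / K_P) 1 else 1)
    (hK0 : 0 < K) (hrKP : r < K_P) (hpos : ∀ i, 1 ≤ i → i ≤ K_P → 0 < gam i)
    (hzero : ∀ i, K_P < i → gam i = 0) {i : ℕ} (hi : 1 ≤ i) :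
    HasLogGrowth atTop (fun γ => log (γ * K / (γ * gam i + lam i γ)))
      (if K_P < i then 1 else 0) := by
  have hl : ∀ᶠ γ in atTop, (0 : ℝ) < γ := eventually_gt_atTop 0
  split_ifs with hiKP
  · refine hasLogGrowth_log_mul_div_of_tendsto hl (Nat.cast_pos.2 hK0)
      (tendsto_const_nhds.congr fun γ => ?_) one_pos
    rw [hzero i hiKP, hlam, if_neg (by omega), mul_zero, zero_add]
  · have hgam : 0 < gam i := hpos i hi (not_lt.1 hiKP)
    have hμ : 0 ≤ if i ≤ r then max ((K_S : ℝ) * gam i / K_P) 0 else 0 := by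
      split_ifs
      exacts [le_max_right _ _, le_rfl]
    refine hasLogGrowth_log_mul_div_of_tendsto_div hl (Nat.cast_pos.2 hK0)
      ((tendsto_const_nhds.add (tendsto_lam_div_atTop hlam i)).congr' ?_)
      (add_pos_of_pos_of_nonneg hgam hμ)
    filter_upwards [hl] with γ hγ
    rw [add_div, mul_div_cancel_left₀ _ hγ.ne']

theorem hasLogGrowth_log_lam_atTop
    (hlam : ∀ i γ, lam i γ = if i ≤ r then max ((K_S : ℝ) * γ * gam i / K_P) 1 else 1)
    (hKS : 0 < K_S) (hrKP : r < K_P) (hpos : ∀ i, 1 ≤ i → i ≤ K_P → 0 < gam i)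
    {i : ℕ} (hi : 1 ≤ i) :
    HasLogGrowth atTop (fun γ => log (lam i γ)) (if i ≤ r then 1 else 0) := by
  split_ifs with hir
  · have h := tendsto_lam_div_atTop hlam i
    rw [if_pos hir] at h
    have hgam : 0 < gam i := hpos i hi (by omega)
    have hKP : (0 : ℝ) < K_P := Nat.cast_pos.2 (by omega)
    have hKS' : (0 : ℝ) < K_S := Nat.cast_pos.2 hKS
    exact hasLogGrowth_log_of_tendsto_div (eventually_gt_atTop 0) h
      (lt_max_of_lt_left (by positivity))
  · exact hasLogGrowth_log_of_tendsto
      (tendsto_const_nhds.congr fun γ => by rw [hlam, if_neg hir]) one_ne_zero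

theorem hasLogGrowth_compressedLogLikelihood_atTop
    (hlam : ∀ i γ, lam i γ = if i ≤ r then max ((K_S : ℝ) * γ * gam i / K_P) 1 else 1)
    (hK : K = K_P + K_S) (hKS : 0 < K_S) (hrKP : r < K_P) (hKPN : K_P ≤ N)
    (hpos : ∀ i, 1 ≤ i → i ≤ K_P → 0 < gam i) (hzero : ∀ i, K_P < i → gam i = 0) :
    HasLogGrowth atTop (compressedLogLikelihood N K_S K gam lam)
      (((N : ℝ) - K_P) * K_P - ((K_P : ℝ) - r) * K_S) := by
  convert hasLogGrowth_compressedLogLikelihood (N := N) (K := K)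
    (fun i hi =>
      hasLogGrowth_log_mul_div_lam_atTop hlam (by omega) hrKP hpos hzero (mem_Icc.1 hi).1)
    (fun i hi => hasLogGrowth_log_lam_atTop hlam hKS hrKP hpos (mem_Icc.1 hi).1) using 1
  have hA : (Icc 1 N).filter (K_P < ·) = Ioc K_P N := by
    ext i; simp only [mem_filter, mem_Icc, mem_Ioc]; omega
  have hB : (Icc 1 N).filter (· ≤ r) = Icc 1 r := by
    ext i; simp only [mem_filter, mem_Icc]; omega
  rw [sum_boole, sum_boole, hA, hB, Nat.card_Ioc, Nat.card_Icc, Nat.cast_sub hKPN, hK]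
  push_cast
  ring

end Asymptotics

theorem stmt16_general (N K_P K_S r K : ℕ) (hK : K = K_P + K_S)
    (hrKP : r < K_P) (hKPN : K_P ≤ N)
    (gam : ℕ → ℝ) (hnn : ∀ i, 0 ≤ gam i)
    (hpos : ∀ i, 1 ≤ i → i ≤ K_P → 0 < gam i) (hzero : ∀ i, K_P < i → gam i = 0)
    (hcond : ((N : ℝ) - K_P) * K_P < ((K_P : ℝ) - r) * K_S)
    (lam : ℕ → ℝ → ℝ)
    (hlam : ∀ i γ, lam i γ = if i ≤ r then max ((K_S : ℝ) * γ * gam i / K_P) 1 else 1)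
    (g : ℝ → ℝ)
    (hg : ∀ γ : ℝ, 0 < γ →
      g γ = -((N : ℝ) * K_S) * Real.log γ +
        (K : ℝ) * ∑ i ∈ Finset.Icc 1 N, Real.log (γ * K / (γ * gam i + lam i γ)) +
        (K_S : ℝ) * ∑ i ∈ Finset.Icc 1 N, Real.log (lam i γ)) :
    Tendsto g (nhdsWithin 0 (Set.Ioi 0)) atBot ∧
    Tendsto g atTop atBot ∧
    ∃ γ₀ : ℝ, 0 < γ₀ ∧ ∀ γ : ℝ, 0 < γ → g γ ≤ g γ₀ := by
  have hKS : 0 < K_S := Nat.pos_of_ne_zero fun h => by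
    rw [h, Nat.cast_zero, mul_zero] at hcond
    exact hcond.not_ge (mul_nonneg (sub_nonneg.2 (Nat.cast_le.2 hKPN)) (Nat.cast_nonneg _))
  have hK0 : 0 < K := by omega
  have hg_eq : ∀ l : Filter ℝ, (∀ᶠ γ in l, 0 < γ) →
      compressedLogLikelihood N K_S K gam lam =ᶠ[l] g := fun l hl =>
    hl.mono fun γ hγ => (hg γ hγ).symm
  have h0 : Tendsto g (𝓝[>] 0) atBot :=
    ((hasLogGrowth_compressedLogLikelihood_nhdsGT hlam hK hK0).congr'
      (hg_eq _ self_mem_nhdsWithin)).tendsto_atBot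
      (tendsto_log_nhdsGT_zero.const_mul_atBot
        (mul_pos (Nat.cast_pos.2 (by omega)) (Nat.cast_pos.2 (by omega))))
  have htop : Tendsto g atTop atBot :=
    ((hasLogGrowth_compressedLogLikelihood_atTop hlam hK hKS hrKP hKPN hpos hzero).congr'
      (hg_eq _ (eventually_gt_atTop 0))).tendsto_atBot
      (tendsto_log_atTop.const_mul_atTop_of_neg (by linarith))
  have hcont : ContinuousOn g (Set.Ioi 0) :=
    (continuousOn_compressedLogLikelihood hK0 hnn (continuous_lam hlam) (one_le_lam hlam)).congr
      fun γ hγ => hg γ hγ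
  exact ⟨h0, htop, hcont.exists_forall_le_of_tendsto_atBot_Ioi h0 htop⟩

/-- Theorem 4 of the paper (existence of the maximizer): the compressed log-likelihood
`g(γ) = −N K_S log γ + K Σ_{i=1}^N log(γK/(γγ_i + λ̂_i(γ))) + K_S Σ_{i=1}^N log λ̂_i(γ)`,
with `λ̂_i(γ) = max(K_S γ γ_i/K_P, 1)` for `i ≤ r` and `λ̂_i(γ) = 1` for `i > r`,
tends to `−∞` as `γ → 0⁺` and as `γ → +∞` when `(K_P − r)K_S > (N − K_P)K_P`, so it
attains its global maximum on `(0, ∞)`. -/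
theorem stmt16 (N K_P K_S r K : ℕ) (hK : K = K_P + K_S) (hr : 0 < r)
    (hrKP : r < K_P) (hKPN : K_P ≤ N) (hKS : N ≤ K_S)
    (gam : ℕ → ℝ) (hanti : AntitoneOn gam (Set.Icc 1 N)) (hnn : ∀ i, 0 ≤ gam i)
    (hpos : ∀ i, 1 ≤ i → i ≤ K_P → 0 < gam i) (hzero : ∀ i, K_P < i → gam i = 0)
    (hcond : ((N : ℝ) - K_P) * K_P < ((K_P : ℝ) - r) * K_S)
    (lam : ℕ → ℝ → ℝ)
    (hlam : ∀ i γ, lam i γ = if i ≤ r then max ((K_S : ℝ) * γ * gam i / K_P) 1 else 1)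
    (g : ℝ → ℝ)
    (hg : ∀ γ : ℝ, 0 < γ →
      g γ = -((N : ℝ) * K_S) * Real.log γ +
        (K : ℝ) * ∑ i ∈ Finset.Icc 1 N, Real.log (γ * K / (γ * gam i + lam i γ)) +
        (K_S : ℝ) * ∑ i ∈ Finset.Icc 1 N, Real.log (lam i γ)) :
    Tendsto g (nhdsWithin 0 (Set.Ioi 0)) atBot ∧
    Tendsto g atTop atBot ∧
    ∃ γ₀ : ℝ, 0 < γ₀ ∧ ∀ γ : ℝ, 0 < γ → g γ ≤ g γ₀ :=
  stmt16_general N K_P K_S r K hK hrKP hKPN gam hnn hpos hzero hcond lam hlam g hg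
end

section
/- Let γ > 0, let γ_1 ≥ … ≥ γ_r > 0, K = K_P + K_S with K_P ≥ r, and define f_1'(γ) = −r K_S log γ + K Σ_{i=1}^r log(γK/(γγ_i + λ̂_i(γ))) + K_S Σ_{i=1}^r log λ̂_i(γ), where λ̂_i(γ) = max(K_S γγ_i/K_P, 1). Then f_1' is nondecreasing on (0, ∞): its derivative is strictly positive for γ < (K_P/K_S)(1/γ_r) and equals zero for γ ≥ (K_P/K_S)(1/γ_r). -/
/-!
Below its kink `γ = K_P / (K_S γ_i)` the `i`-th summand of `f_1'` has `λ̂_i = 1` and derivative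
`K / (γ (γ γ_i + 1))`; above it `λ̂_i = K_S γ γ_i / K_P`, the first logarithm is constant and the
derivative is `K_S / γ`. The two agree at the kink, so with `K = K_P + K_S` the derivative of
`f_1'` is `Σ_i (K_P - K_S γ γ_i)⁺ / (γ (γ γ_i + 1))`: nonnegative, positive as long as the
smallest `γ_r` is below its kink, and zero once every `γ_i` is above it.
-/

open Finset Set Filter Real Topology

theorem hasDerivAt_of_eqOn_Iic_of_eqOn_Ici {f g h : ℝ → ℝ} {t x f' : ℝ}
    (hfg : EqOn f g (Iic t)) (hfh : EqOn f h (Ici t))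
    (hg : x ≤ t → HasDerivAt g f' x) (hh : t ≤ x → HasDerivAt h f' x) :
    HasDerivAt f f' x := by
  rcases lt_trichotomy x t with hxt | rfl | htx
  · exact (hg hxt.le).congr_of_eventuallyEq <|
      eventuallyEq_of_mem (Iio_mem_nhds hxt) fun y (hy : y < t) => hfg hy.le
  · have hIic := (hg le_rfl).hasDerivWithinAt.congr hfg (hfg self_mem_Iic)
    have hIci := (hh le_rfl).hasDerivWithinAt.congr hfh (hfh self_mem_Ici)
    simpa [Iic_union_Ici] using hIic.union hIci
  · exact (hh htx.le).congr_of_eventuallyEq <|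
      eventuallyEq_of_mem (Ioi_mem_nhds htx) fun y (hy : t < y) => hfh hy.le

theorem hasDerivAt_log_mul_div_mul_add_one {K a x : ℝ} (hK : K ≠ 0) (hx : x ≠ 0)
    (hxa : x * a + 1 ≠ 0) :
    HasDerivAt (fun y => K * log (y * K / (y * a + 1))) (K / (x * (x * a + 1))) x := by
  have hquot : HasDerivAt (fun y => y * K / (y * a + 1))
      ((1 * K * (x * a + 1) - x * K * (1 * a)) / (x * a + 1) ^ 2) x :=
    ((hasDerivAt_id x).mul_const K).div (((hasDerivAt_id x).mul_const a).add_const 1) hxa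
  refine ((hquot.log (div_ne_zero (mul_ne_zero hx hK) hxa)).const_mul K).congr_deriv ?_
  field_simp
  ring

theorem hasDerivAt_log_mul_div_mul_add_mul_add_log {K S a c x : ℝ} (hc : c ≠ 0) (hx : x ≠ 0) :
    HasDerivAt (fun y => K * log (y * K / (y * a + c * y)) + S * log (c * y)) (S / x) x := by
  have hconst : (fun y => K * log (y * K / (y * a + c * y))) =ᶠ[𝓝 x]
      fun _ => K * log (K / (a + c)) :=
    eventually_ne_nhds hx |>.mono fun y hy => by
      dsimp only
      rw [show y * a + c * y = y * (a + c) by ring, mul_div_mul_left _ _ hy]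
  refine ((hasDerivAt_const x _).congr_of_eventuallyEq hconst).add
    ((((hasDerivAt_id x).const_mul c).log (mul_ne_zero hc hx)).const_mul S) |>.congr_deriv ?_
  simp only [id]
  field_simp
  ring

noncomputable def lambdaHat (P S a x : ℝ) : ℝ := max (S * x * a / P) 1

noncomputable def fSummand (K P S a x : ℝ) : ℝ :=
  K * log (x * K / (x * a + lambdaHat P S a x)) + S * log (lambdaHat P S a x)

noncomputable def excessDeriv (P S a x : ℝ) : ℝ := max (P - S * x * a) 0 / (x * (x * a + 1))

section excessDeriv

variable {P S a x : ℝ}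

theorem excessDeriv_nonneg (ha : 0 ≤ a) (hx : 0 < x) : 0 ≤ excessDeriv P S a x :=
  div_nonneg (le_max_right _ _) (by positivity)

theorem excessDeriv_pos (ha : 0 ≤ a) (hx : 0 < x) (h : S * x * a < P) :
    0 < excessDeriv P S a x :=
  div_pos (lt_max_of_lt_left (sub_pos.2 h)) (by positivity)

theorem excessDeriv_eq_zero (h : P ≤ S * x * a) : excessDeriv P S a x = 0 := by
  rw [excessDeriv, max_eq_right (sub_nonpos.2 h), zero_div]

end excessDeriv

theorem hasDerivAt_fSummand {K P S a x : ℝ} (hP : 0 < P) (hS : 0 < S) (ha : 0 < a)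
    (hK : K = P + S) (hx : 0 < x) :
    HasDerivAt (fSummand K P S a) (S / x + excessDeriv P S a x) x := by
  have hSa : 0 < S * a := mul_pos hS ha
  have hlow : EqOn (fSummand K P S a) (fun y => K * log (y * K / (y * a + 1)))
      (Iic (P / (S * a))) := by
    intro y (hy : y ≤ P / (S * a))
    rw [le_div_iff₀ hSa] at hy
    have hlam : lambdaHat P S a y = 1 := max_eq_right <| (div_le_one hP).2 (by linarith)
    simp only [fSummand, hlam, log_one, mul_zero, add_zero]
  have hhigh : EqOn (fSummand K P S a)
      (fun y => K * log (y * K / (y * a + S * a / P * y)) + S * log (S * a / P * y))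
      (Ici (P / (S * a))) := by
    intro y (hy : P / (S * a) ≤ y)
    rw [div_le_iff₀ hSa] at hy
    have hlam : lambdaHat P S a y = S * a / P * y := by
      rw [lambdaHat, max_eq_left ((one_le_div hP).2 (by linarith))]
      ring
    simp only [fSummand, hlam]
  refine hasDerivAt_of_eqOn_Iic_of_eqOn_Ici hlow hhigh (fun hxt => ?_) (fun htx => ?_)
  · rw [le_div_iff₀ hSa] at hxt
    rw [excessDeriv, max_eq_left (by linarith)]
    refine (hasDerivAt_log_mul_div_mul_add_one (by rw [hK]; positivity) hx.ne'
      (by positivity)).congr_deriv ?_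
    rw [hK]
    field_simp
    ring
  · rw [div_le_iff₀ hSa] at htx
    rw [excessDeriv_eq_zero (by linarith), add_zero]
    exact hasDerivAt_log_mul_div_mul_add_mul_add_log (by positivity) hx.ne'

theorem hasDerivAt_sum_fSummand_sub_log {ι : Type*} (s : Finset ι) {K P S x : ℝ} {a : ι → ℝ}
    (hP : 0 < P) (hS : 0 < S) (ha : ∀ i ∈ s, 0 < a i) (hK : K = P + S) (hx : 0 < x) :
    HasDerivAt (fun y => ∑ i ∈ s, fSummand K P S (a i) y - #s * S * log y)
      (∑ i ∈ s, excessDeriv P S (a i) x) x := by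
  refine ((HasDerivAt.fun_sum fun i hi => hasDerivAt_fSummand hP hS (ha i hi) hK hx).sub
    ((hasDerivAt_log hx.ne').const_mul _)).congr_deriv ?_
  rw [sum_add_distrib, sum_const, nsmul_eq_mul]
  field_simp
  ring

theorem div_mul_one_div_le_iff {P S g x : ℝ} (hS : 0 < S) (hg : 0 < g) :
    P / S * (1 / g) ≤ x ↔ P ≤ S * x * g := by
  rw [div_mul_div_comm, mul_one, div_le_iff₀ (mul_pos hS hg)]
  ring_nf

/-- The function
`f_1'(γ) = −r K_S log γ + K Σ_{i=1}^r log(γK/(γγ_i + λ̂_i(γ))) + K_S Σ_{i=1}^r log λ̂_i(γ)`,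
with `λ̂_i(γ) = max(K_S γγ_i/K_P, 1)`, is nondecreasing on `(0, ∞)`: its derivative is
strictly positive for `γ < (K_P/K_S)(1/γ_r)` and equals zero for `γ ≥ (K_P/K_S)(1/γ_r)`. -/
theorem stmt18 (K_P K_S r K : ℕ) (hK : K = K_P + K_S) (hr : 0 < r) (hrKP : r ≤ K_P)
    (hKS : 0 < K_S)
    (gam : ℕ → ℝ) (hanti : AntitoneOn gam (Set.Icc 1 r))
    (hpos : ∀ i, 1 ≤ i → i ≤ r → 0 < gam i)
    (f : ℝ → ℝ)
    (hf : ∀ γ : ℝ, 0 < γ →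
      f γ = -((r : ℝ) * K_S) * Real.log γ +
        (K : ℝ) * ∑ i ∈ Finset.Icc 1 r,
          Real.log (γ * K / (γ * gam i + max ((K_S : ℝ) * γ * gam i / K_P) 1)) +
        (K_S : ℝ) * ∑ i ∈ Finset.Icc 1 r, Real.log (max ((K_S : ℝ) * γ * gam i / K_P) 1)) :
    MonotoneOn f (Set.Ioi 0) ∧
    (∀ γ : ℝ, 0 < γ → γ < (K_P : ℝ) / K_S * (1 / gam r) → 0 < deriv f γ) ∧
    (∀ γ : ℝ, (K_P : ℝ) / K_S * (1 / gam r) ≤ γ → deriv f γ = 0) := by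
  have hP : (0 : ℝ) < K_P := by exact_mod_cast hr.trans_le hrKP
  have hS : (0 : ℝ) < K_S := by exact_mod_cast hKS
  have hKR : (K : ℝ) = K_P + K_S := by exact_mod_cast hK
  have hgam (i : ℕ) (hi : i ∈ Finset.Icc 1 r) : 0 < gam i :=
    hpos i (Finset.mem_Icc.1 hi).1 (Finset.mem_Icc.1 hi).2
  have hr_mem : r ∈ Finset.Icc 1 r := Finset.mem_Icc.2 ⟨hr, le_rfl⟩
  have hderiv (x : ℝ) (hx : 0 < x) :
      HasDerivAt f (∑ i ∈ Finset.Icc 1 r, excessDeriv K_P K_S (gam i) x) x := by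
    refine (hasDerivAt_sum_fSummand_sub_log _ hP hS hgam hKR hx).congr_of_eventuallyEq ?_
    filter_upwards [Ioi_mem_nhds hx] with y hy
    rw [hf y hy, Nat.card_Icc, Nat.add_sub_cancel, mul_sum, mul_sum]
    simp only [fSummand, lambdaHat, sum_add_distrib]
    ring
  have hnonneg (x : ℝ) (hx : 0 < x) (i : ℕ) (hi : i ∈ Finset.Icc 1 r) :
      0 ≤ excessDeriv K_P K_S (gam i) x :=
    excessDeriv_nonneg (hgam i hi).le hx
  refine ⟨?_, fun γ hγ hlt => ?_, fun γ hγ => ?_⟩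
  · refine monotoneOn_of_hasDerivWithinAt_nonneg (convex_Ioi 0)
      (fun x hx => (hderiv x hx).continuousAt.continuousWithinAt)
      (fun x hx => (hderiv x (interior_subset hx)).hasDerivWithinAt)
      fun x hx => sum_nonneg (hnonneg x (interior_subset hx))
  · rw [(hderiv γ hγ).deriv]
    refine sum_pos' (hnonneg γ hγ) ⟨r, hr_mem, excessDeriv_pos (hgam r hr_mem).le hγ ?_⟩
    exact not_le.1 fun h => hlt.not_ge ((div_mul_one_div_le_iff hS (hgam r hr_mem)).2 h)
  · have hγ0 : 0 < γ := lt_of_lt_of_le (by have := hgam r hr_mem; positivity) hγ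
    rw [(hderiv γ hγ0).deriv]
    refine sum_eq_zero fun i hi => excessDeriv_eq_zero ?_
    have hri : gam r ≤ gam i := hanti (Finset.mem_Icc.1 hi) ⟨hr, le_rfl⟩ (Finset.mem_Icc.1 hi).2
    exact ((div_mul_one_div_le_iff hS (hgam r hr_mem)).1 hγ).trans
      (mul_le_mul_of_nonneg_left hri (by positivity))
end
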